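/- arXiv:0903.1689 — 2 statements merged into one kernel-verified Lean document; each statement's English description precedes it below -/
import Mathlib

section
/- For every integer k ≥ 0, the Laurent polynomial Y⁻¹t⁻¹·(I − Yt)·Q_{−(3k+3)}(t)·Yt·(I − Xt) is twin. -/
/-- The image of (123) under the irreducible 3-dimensional integral representation of A₄. -/
def Xm : Matrix (Fin 3) (Fin 3) ℤ := !![-1, 1, 0; -1, 0, 0; -1, 0, 1]

/-- The image of (142) under the irreducible 3-dimensional integral representation of A₄. -/
def Ym : Matrix (Fin 3) (Fin 3) ℤ := !![0, 0, -1; 0, 1, -1; 1, 0, -1]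

/-- The inverse of `Xm`, which equals `Xm ^ 2`. -/
def Xinv : Matrix (Fin 3) (Fin 3) ℤ := Xm ^ 2

/-- The inverse of `Ym`, which equals `Ym ^ 2`. -/
def Yinv : Matrix (Fin 3) (Fin 3) ℤ := Ym ^ 2

open LaurentPolynomial Finset

/-- 3×3 integer matrices. -/
abbrev M3 : Type := Matrix (Fin 3) (Fin 3) ℤ

/-- Laurent polynomials in `t` with coefficients in `M3`. -/
abbrev L : Type := LaurentPolynomial M3

/-- A Laurent polynomial `f = ∑ d_j t^j` with 3×3 integer matrix coefficients is *twin* if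
`d_j = c_j I + c_j' (XYX)` for `j ≡ 0 (mod 3)`, `d_j = a_j (X+Y)` for `j ≡ 1 (mod 3)`,
`d_j = b_j (X⁻¹+Y⁻¹)` for `j ≡ 2 (mod 3)`, and `a_{3j+1} = b_{3j+2}` for all `j`. -/
def IsTwin (f : L) : Prop :=
  ∃ c c' a b : ℤ → ℤ,
    (∀ j : ℤ, j % 3 = 0 → f.coeff j = c j • (1 : M3) + c' j • (Xm * Ym * Xm)) ∧
    (∀ j : ℤ, j % 3 = 1 → f.coeff j = a j • (Xm + Ym)) ∧
    (∀ j : ℤ, j % 3 = 2 → f.coeff j = b j • (Xinv + Yinv)) ∧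
    (∀ j : ℤ, a (3 * j + 1) = b (3 * j + 2))

/-- `Q m = ∑_{i=0}^m (YX)^i t^{2i}` for `m ≥ 0` and
`Q (-m) = ∑_{i=1}^m (X⁻¹Y⁻¹)^i t^{-2i}` for `m ≥ 1`. -/
noncomputable def Q (m : ℤ) : L :=
  if 0 ≤ m then ∑ i ∈ Finset.range (m.toNat + 1), C ((Ym * Xm) ^ i) * T (2 * (i : ℤ))
  else ∑ i ∈ Finset.range (-m).toNat, C ((Xinv * Yinv) ^ (i + 1)) * T (-(2 * ((i : ℤ) + 1)))

/-! Since `(X⁻¹Y⁻¹)³ = I`, the sum `Q_{-(3k+3)}` is `∑_{m ≤ k} t^{-6m} Q_{-3}`, and `t` is central,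
so the product is `∑_{m ≤ k} t^{-6m} B` with `B` the product for `k = 0`. Twin Laurent polynomials
form an additive subgroup stable under multiplication by `t^{3n}`, and a direct computation gives
`B = 1 - 2 XYX t⁻³ + t⁻⁶ - (t⁻³ + t⁻⁶)((X + Y) t + (X⁻¹ + Y⁻¹) t²)`, which is visibly twin. -/

open AddMonoidAlgebra

lemma coeff_T_mul (n j : ℤ) (f : L) : (T n * f).coeff j = f.coeff (j - n) := by
  rw [T, coeff_single_mul_apply, one_mul, neg_add_eq_sub]

namespace IsTwin

lemma zero : IsTwin 0 :=
  ⟨0, 0, 0, 0, fun _ _ => by simp, fun _ _ => by simp, fun _ _ => by simp, fun _ => rfl⟩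

lemma add {f g : L} (hf : IsTwin f) (hg : IsTwin g) : IsTwin (f + g) := by
  obtain ⟨c, c', a, b, hf₀, hf₁, hf₂, hab⟩ := hf
  obtain ⟨d, d', e, e', hg₀, hg₁, hg₂, hee'⟩ := hg
  refine ⟨c + d, c' + d', a + e, b + e', fun j hj => ?_, fun j hj => ?_, fun j hj => ?_,
    fun j => by simp [hab, hee']⟩
  · simp only [coeff_add, Finsupp.coe_add, Pi.add_apply, hf₀ j hj, hg₀ j hj, add_smul]
    abel
  · simp only [coeff_add, Finsupp.coe_add, Pi.add_apply, hf₁ j hj, hg₁ j hj, add_smul]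
  · simp only [coeff_add, Finsupp.coe_add, Pi.add_apply, hf₂ j hj, hg₂ j hj, add_smul]

lemma neg {f : L} (hf : IsTwin f) : IsTwin (-f) := by
  obtain ⟨c, c', a, b, hf₀, hf₁, hf₂, hab⟩ := hf
  refine ⟨-c, -c', -a, -b, fun j hj => ?_, fun j hj => ?_, fun j hj => ?_, fun j => by simp [hab]⟩
  · simp only [coeff_neg, Finsupp.coe_neg, Pi.neg_apply, hf₀ j hj, neg_smul, neg_add]
  · simp only [coeff_neg, Finsupp.coe_neg, Pi.neg_apply, hf₁ j hj, neg_smul]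
  · simp only [coeff_neg, Finsupp.coe_neg, Pi.neg_apply, hf₂ j hj, neg_smul]

lemma T_mul {f : L} {n : ℤ} (hn : 3 ∣ n) (hf : IsTwin f) : IsTwin (T n * f) := by
  obtain ⟨m, rfl⟩ := hn
  obtain ⟨c, c', a, b, hf₀, hf₁, hf₂, hab⟩ := hf
  refine ⟨fun j => c (j - 3 * m), fun j => c' (j - 3 * m), fun j => a (j - 3 * m),
    fun j => b (j - 3 * m), fun j hj => ?_, fun j hj => ?_, fun j hj => ?_, fun j => ?_⟩
  · rw [coeff_T_mul, hf₀ _ (by omega)]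
  · rw [coeff_T_mul, hf₁ _ (by omega)]
  · rw [coeff_T_mul, hf₂ _ (by omega)]
  · convert hab (j - m) using 2 <;> ring

end IsTwin

def twinSubgroup : AddSubgroup L where
  carrier := {f | IsTwin f}
  zero_mem' := IsTwin.zero
  add_mem' := IsTwin.add
  neg_mem' := IsTwin.neg

lemma isTwin_C (c c' : ℤ) : IsTwin (C (c • 1 + c' • (Xm * Ym * Xm))) := by
  refine ⟨fun j => if j = 0 then c else 0, fun j => if j = 0 then c' else 0, 0, 0,
    fun j _ => ?_, fun j hj => ?_, fun j hj => ?_, fun _ => rfl⟩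
  · rw [C_apply]
    by_cases h : j = 0 <;> simp [h]
  · rw [C_apply, if_neg (by omega)]; simp
  · rw [C_apply, if_neg (by omega)]; simp

lemma isTwin_pair : IsTwin (C (Xm + Ym) * T 1 + C (Xinv + Yinv) * T 2) := by
  refine ⟨0, 0, fun j => if j = 1 then 1 else 0, fun j => if j = 2 then 1 else 0,
    fun j hj => ?_, fun j hj => ?_, fun j hj => ?_, fun j => ?_⟩
  all_goals simp only [← single_eq_C_mul_T, coeff_add, coeff_single, Finsupp.coe_add, Pi.add_apply,
    Finsupp.single_apply]
  · rw [if_neg (by omega), if_neg (by omega)]; simp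
  · rw [if_neg (by omega : (2:ℤ) ≠ j)]; split_ifs <;> first | omega | simp
  · rw [if_neg (by omega : (1:ℤ) ≠ j)]; split_ifs <;> first | omega | simp
  · exact if_congr (by omega) rfl rfl

lemma sandwich_Q_neg_three_eq :
    C Yinv * T (-1) * (1 - C Ym * T 1) * Q (-3) * (C Ym * T 1) * (1 - C Xm * T 1) =
      1 - T (-3) * C (2 • (Xm * Ym * Xm)) + T (-6)
        - (T (-3) + T (-6)) * (C (Xm + Ym) * T 1 + C (Xinv + Yinv) * T 2) := by
  simp only [Q, show ¬ (0:ℤ) ≤ -3 by norm_num, if_false, show (- -3 : ℤ).toNat = 3 from rfl,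
    sum_range_succ, sum_range_zero, zero_add]
  simp only [← single_eq_C, ← single_zero_one_eq_one, T, mul_add, add_mul, mul_sub, sub_mul,
    single_mul_single]
  refine LaurentPolynomial.ext fun j => ?_
  simp only [coeff_add, coeff_sub, Finsupp.coe_add, Finsupp.coe_sub, Pi.add_apply, Pi.sub_apply,
    coeff_single, Finsupp.single_apply]
  norm_num
  by_cases hj : -6 ≤ j ∧ j ≤ 0
  · obtain ⟨h₁, h₂⟩ := hj
    interval_cases j <;> simp <;> decide
  · have hne : ∀ n : ℤ, -6 ≤ n → n ≤ 0 → n ≠ j := fun n h₁ h₂ h => hj ⟨h ▸ h₁, h ▸ h₂⟩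
    simp [hne]

lemma isTwin_sandwich_Q_neg_three :
    IsTwin (C Yinv * T (-1) * (1 - C Ym * T 1) * Q (-3) * (C Ym * T 1) * (1 - C Xm * T 1)) := by
  have h1 : IsTwin 1 := by simpa using isTwin_C 1 0
  have hN : IsTwin (C (2 • (Xm * Ym * Xm))) := by simpa using isTwin_C 0 2
  rw [sandwich_Q_neg_three_eq, add_mul]
  refine twinSubgroup.sub_mem (twinSubgroup.add_mem (twinSubgroup.sub_mem h1 ?_) ?_)
    (twinSubgroup.add_mem ?_ ?_)
  · exact hN.T_mul (by norm_num)
  · have h6 := h1.T_mul (n := -6) (by norm_num)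
    rwa [mul_one] at h6
  · exact isTwin_pair.T_mul (by norm_num)
  · exact isTwin_pair.T_mul (by norm_num)

lemma Q_neg_three_mul_add_three (k : ℕ) :
    Q (-(3 * k + 3)) = ∑ m ∈ range (k + 1), T (-(6 * m)) * Q (-3) := by
  set term : ℕ → L := fun i => C ((Xinv * Yinv) ^ (i + 1)) * T (-(2 * ((i : ℤ) + 1)))
  have hQ (k : ℕ) : Q (-(3 * k + 3)) = ∑ i ∈ range (3 * k + 3), term i := by
    rw [Q, if_neg (by omega), show (-(-(3 * (k : ℤ) + 3))).toNat = 3 * k + 3 by omega]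
  have hQ3 : Q (-3) = ∑ i ∈ range 3, term i := by simpa using hQ 0
  have hperiod (k i : ℕ) : term (3 * k + 3 + i) = T (-(6 * ((k + 1 : ℕ) : ℤ))) * term i := by
    have hA : (Xinv * Yinv) ^ (3 * k + 3 + i + 1) = (Xinv * Yinv) ^ (i + 1) := by
      rw [show 3 * k + 3 + i + 1 = 3 * (k + 1) + (i + 1) by ring, pow_add, pow_mul,
        show (Xinv * Yinv) ^ 3 = 1 by decide, one_pow, one_mul]
    simp only [term]
    rw [(commute_T _ _).left_comm, ← T_add, hA]
    congr 2
    push_cast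
    ring
  induction k with
  | zero => simp
  | succ k ih =>
    rw [sum_range_succ, ← ih]
    simp only [hQ3, hQ]
    rw [show 3 * (k + 1) + 3 = 3 * k + 3 + 3 by ring, sum_range_add, mul_sum]
    simp only [hperiod]

/-- For every `k ≥ 0`, `Y⁻¹t⁻¹·(I − Yt)·Q_{−(3k+3)}(t)·Yt·(I − Xt)` is twin. -/
theorem stmt_12 (k : ℕ) :
    IsTwin (C Yinv * T (-1) * (1 - C Ym * T 1) * Q (-(3 * k + 3)) * (C Ym * T 1) *
      (1 - C Xm * T 1)) := by
  have hshift (u v w q : L) (n : ℤ) : u * (T n * q) * v * w = T n * (u * q * v * w) := by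
    rw [← (commute_T n u).left_comm]
    simp only [mul_assoc]
  rw [Q_neg_three_mul_add_three]
  simp only [mul_sum, sum_mul, hshift]
  exact twinSubgroup.sum_mem fun m _ => isTwin_sandwich_Q_neg_three.T_mul ⟨-(2 * m), by ring⟩
end

section
/- The following identity of Laurent polynomials with 3×3 integer matrix coefficients holds: Y⁻¹t⁻¹·(I − Yt)·Q_{−3}(t)·Yt·(I − Xt) = I·t⁻⁶ − (X+Y)·t⁻⁵ − (X⁻¹+Y⁻¹)·t⁻⁴ − 2·XYX·t⁻³ − (X+Y)·t⁻² − (X⁻¹+Y⁻¹)·t⁻¹ + I. -/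
open LaurentPolynomial Finset

/-!
With `P = X⁻¹Y⁻¹ = (YX)⁻¹` the left side is `(Y⁻¹t⁻¹ − I)(Pt⁻² + P²t⁻⁴ + P³t⁻⁶)(Yt − YXt²)`.
Expanding, and cancelling `Y⁻¹Y`, `X⁻¹X` and `P³ = I`, leaves `I` in degrees `0` and `−6` and
a sum of two group words in each degree between. In degrees `−5` and `−1` these are already
`−(X + Y)` and `−(X⁻¹ + Y⁻¹)`; in degrees `−4, −3, −2` they are turned into the right side by
three linear relations of `ξ₀`, checked by matrix computation.
-/

namespace LaurentPolynomial

variable {R : Type*}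

lemma C_mul_T_mul_C_mul_T [Semiring R] (a b : R) (m n : ℤ) :
    C a * T m * (C b * T n) = C (a * b) * T (m + n) := by
  rw [mul_assoc, ← mul_assoc (T m), T_mul, mul_assoc, ← T_add, ← mul_assoc, ← map_mul]

-- For `R = M3`, `M3[T;T⁻¹]` elaborates through `Matrix.semiring`, so `neg_mul` does not fire
-- after `map_neg`; applying this lemma resolves the instance diamond by unification.
lemma C_neg_mul [Ring R] (a : R) (f : R[T;T⁻¹]) : C (-a) * f = -(C a * f) := by
  rw [map_neg, neg_mul]

end LaurentPolynomial

lemma Yinv_mul_Ym : Yinv * Ym = 1 := by decide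

lemma Xinv_mul_Xm : Xinv * Xm = 1 := by decide

lemma Yinv_mul_cancel_left (A : M3) : Yinv * (Ym * A) = A := by
  rw [← mul_assoc, Yinv_mul_Ym, one_mul]

lemma Xinv_mul_Yinv_pow_three : (Xinv * Yinv) ^ 3 = 1 := by decide

lemma Yinv_mul_Xinv_add_Xinv_mul_Yinv : Yinv * Xinv + Xinv * Yinv = -(Xm + Ym) := by decide

lemma Yinv_mul_Xinv_mul_Yinv_add_Xinv_mul_Yinv_mul_Xinv :
    Yinv * Xinv * Yinv + Xinv * Yinv * Xinv = 2 * (Xm * Ym * Xm) := by decide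

lemma Yinv_mul_Xinv_mul_Yinv_mul_Xinv_add_Ym_mul_Xm :
    Yinv * Xinv * Yinv * Xinv + Ym * Xm = -(Xinv + Yinv) := by decide

lemma Q_neg_three :
    Q (-3) = C (Xinv * Yinv) * T (-2) + C ((Xinv * Yinv) ^ 2) * T (-4)
      + C ((Xinv * Yinv) ^ 3) * T (-6) := by
  simp [Q, Finset.sum_range_succ]

/-- `Y⁻¹t⁻¹·(I − Yt)·Q_{−3}(t)·Yt·(I − Xt)
    = I·t⁻⁶ − (X+Y)·t⁻⁵ − (X⁻¹+Y⁻¹)·t⁻⁴ − 2·XYX·t⁻³ − (X+Y)·t⁻² − (X⁻¹+Y⁻¹)·t⁻¹ + I`. -/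
theorem stmt_16 :
    C Yinv * T (-1) * (1 - C Ym * T 1) * Q (-3) * (C Ym * T 1) * (1 - C Xm * T 1)
    = T (-6) - C (Xm + Ym) * T (-5) - C (Xinv + Yinv) * T (-4)
      - 2 * C (Xm * Ym * Xm) * T (-3) - C (Xm + Ym) * T (-2)
      - C (Xinv + Yinv) * T (-1) + 1 := by
  have left_factor : C Yinv * T (-1) * (1 - C Ym * T 1) = C Yinv * T (-1) - 1 := by
    rw [mul_sub, mul_one, C_mul_T_mul_C_mul_T, Yinv_mul_Ym, map_one, neg_add_cancel, T_zero,
      one_mul]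
  have right_factor : C Ym * T 1 * (1 - C Xm * T 1) = C Ym * T 1 - C (Ym * Xm) * T 2 := by
    rw [mul_sub, mul_one, C_mul_T_mul_C_mul_T, one_add_one_eq_two]
  calc
    _ = T (-6) - C (Xm + Ym) * T (-5) + C (Yinv * Xinv * Yinv * Xinv + Ym * Xm) * T (-4)
        - C (Yinv * Xinv * Yinv + Xinv * Yinv * Xinv) * T (-3)
        + C (Yinv * Xinv + Xinv * Yinv) * T (-2) - C (Xinv + Yinv) * T (-1) + 1 := by
      rw [mul_assoc _ (C Ym * T 1), right_factor, left_factor, Q_neg_three]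
      simp only [mul_sub, sub_mul, mul_add, add_mul, one_mul, C_mul_T_mul_C_mul_T]
      norm_num only
      simp only [Xinv_mul_Yinv_pow_three, pow_two, mul_assoc, mul_one, one_mul, Yinv_mul_Ym,
        Xinv_mul_Xm, Yinv_mul_cancel_left, map_add, map_one, T_zero, add_mul]
      abel
    _ = _ := by
      rw [Yinv_mul_Xinv_add_Xinv_mul_Yinv, Yinv_mul_Xinv_mul_Yinv_add_Xinv_mul_Yinv_mul_Xinv,
        Yinv_mul_Xinv_mul_Yinv_mul_Xinv_add_Ym_mul_Xm, C_neg_mul, C_neg_mul, map_mul, map_ofNat]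
      abel
end
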